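/- Let f be a C¹-diffeomorphism of S¹ with irrational rotation number. Then for any λ > 1 there exists n_λ > 0 such that for every integer n > n_λ and every x ∈ S¹ one has λ^{−n} ≤ (fⁿ)'(x) ≤ λⁿ. -/

import Mathlib

open Set Filter

/-- `inArc a w b` : the point `w` (mod 1) lies strictly inside the positively oriented
open arc of the circle `ℝ/ℤ` from `a` (mod 1) to `b` (mod 1). -/
def inArc (a w b : ℝ) : Prop :=
  0 < Int.fract (w - a) ∧ Int.fract (w - a) < Int.fract (b - a)

/-- A lift of an orientation-preserving `C¹`-diffeomorphism of the circle `S¹ = ℝ/ℤ`: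
a `C¹` map `F : ℝ → ℝ` with `F (x+1) = F x + 1` and `F' > 0` everywhere. -/
structure CircleDiffeo where
  toFun : ℝ → ℝ
  contDiff : ContDiff ℝ 1 toFun
  deriv_pos : ∀ x : ℝ, 0 < deriv toFun x
  commute_translation : ∀ x : ℝ, toFun (x + 1) = toFun x + 1

/-- `f` has rotation number (a lift of) `α`. -/
def hasRotationNumber (f : CircleDiffeo) (α : ℝ) : Prop :=
  Tendsto (fun n : ℕ => f.toFun^[n] 0 / (n : ℝ)) atTop (nhds α)

/-- The `C¹`-distance between (lifts of) circle maps : sup distance between the maps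
plus sup distance between the derivatives (computed over a fundamental domain). -/
noncomputable def distC1 (f g : ℝ → ℝ) : ℝ :=
  (⨆ x : Icc (0:ℝ) 1, |f x.1 - g x.1|) + (⨆ x : Icc (0:ℝ) 1, |deriv f x.1 - deriv g x.1|)

/-!
`log (fⁿ)'` is the Birkhoff sum `Sₙφ` of the continuous periodic function `φ = log f'`, and it
vanishes at some point by the mean value theorem on `[0, 1]`. So it suffices that the oscillation
of `Sₙφ` is `o(n)` uniformly.

By Poincaré, `f` is semiconjugate to the rotation by `α` through a monotone degree-one map `H`.
Given `x, y`, the density of `ℕα` mod 1 yields a bounded `p` with `H (fᵖ x)` close to `H y` mod 1,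
and replacing `x` by `fᵖ x` changes `Sₙφ` by `O(p)`. For `a ≤ b` with `H b - H a` smaller than the
distance from `jα` to `ℤ` for `0 < j < Q`, the arcs `fᵏ [a, b]` with `k` in a window of `Q`
consecutive times are disjoint mod 1, because their `H`-images are. Hence in each window at most
`2/η` of them are longer than `η`, and on the others uniform continuity of `φ` applies. Since `f`
may have wandering intervals, `H` can collapse arcs, which is why lengths are counted rather than
compared through `H`.
-/

open Function

theorem Function.Periodic.uniformContinuous_of_continuous {φ : ℝ → ℝ} (hp : Periodic φ 1)
    (hc : Continuous φ) : UniformContinuous φ := by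
  have h : UniformContinuous (hp.lift : AddCircle (1 : ℝ) → ℝ) :=
    CompactSpace.uniformContinuous_of_continuous (hc.quotient_lift _)
  exact h.comp (AddSubgroup.zmultiples (1 : ℝ)).normedMk.uniformContinuous

theorem inv_le_and_le_of_abs_log_le {D c : ℝ} (hD : 0 < D) (hc : 0 < c)
    (h : |Real.log D| ≤ Real.log c) : c⁻¹ ≤ D ∧ D ≤ c := by
  rw [abs_le] at h
  constructor
  · rw [← Real.log_le_log_iff (inv_pos.2 hc) hD, Real.log_inv]
    exact h.1
  · exact (Real.log_le_log_iff hD hc).1 h.2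

namespace Irrational

variable {α : ℝ}

theorem exists_pos_le_abs_nat_mul_sub_int (hα : Irrational α) (Q : ℕ) :
    ∃ d : ℝ, 0 < d ∧ d ≤ 1 ∧ ∀ j : ℕ, 0 < j → j < Q → ∀ m : ℤ, d ≤ |j * α - m| := by
  obtain ⟨d, ⟨hsep, hd1⟩, hd0⟩ :=
    (((hα.eventually_forall_le_dist_cast_div_of_denom_le Q).and
      (eventually_le_nhds one_pos)).filter_mono nhdsWithin_le_nhds |>.and
      (self_mem_nhdsWithin (s := Ioi 0))).exists
  refine ⟨d, hd0, hd1, fun j hj hjQ m => ?_⟩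
  have hj1 : (1 : ℝ) ≤ j := by exact_mod_cast hj
  calc d ≤ |α - m / j| := by simpa [Real.dist_eq] using hsep j hjQ.le m
    _ ≤ j * |α - m / j| := le_mul_of_one_le_left (abs_nonneg _) hj1
    _ = |j * (α - m / j)| := by rw [abs_mul, Nat.abs_cast]
    _ = |j * α - m| := by
        congr 1
        field_simp

theorem exists_nat_mul_add_int_near (hα : Irrational α) {γ : ℝ} (hγ : 0 < γ) :
    ∃ J : ℕ, ∀ θ : ℝ, ∃ p ≤ J, ∃ m : ℤ, |p * α + m - θ| < γ := by
  have hdense : Dense (AddSubgroup.closure {α, 1} : Set ℝ) :=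
    dense_addSubgroupClosure_pair_iff.2 (by simpa using hα)
  have hcover : Icc (0 : ℝ) 1 ⊆ ⋃ p : ℤ × ℤ, Metric.ball (p.1 * α + p.2) γ := by
    intro θ _
    obtain ⟨s, hθs, hs⟩ := Metric.dense_iff.1 hdense θ γ hγ
    obtain ⟨j, m, rfl⟩ := AddSubgroup.mem_closure_pair.1 hs
    exact Set.mem_iUnion.2 ⟨(j, m), by simpa [dist_comm] using hθs⟩
  obtain ⟨t, ht⟩ := isCompact_Icc.elim_finite_subcover _ (fun _ => Metric.isOpen_ball) hcover
  set K := t.sup fun p => p.1.natAbs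
  -- shifting by `K α` turns the multiples `j α`, `|j| ≤ K`, into nonnegative ones `(j + K) α`
  refine ⟨2 * K, fun θ => ?_⟩
  obtain ⟨p, hp, hball⟩ := Set.mem_iUnion₂.1
    (ht ⟨Int.fract_nonneg (θ - K * α), (Int.fract_lt_one (θ - K * α)).le⟩)
  have hpK : p.1.natAbs ≤ K := Finset.le_sup (f := fun p : ℤ × ℤ => p.1.natAbs) hp
  refine ⟨(p.1 + K).toNat, by omega, p.2 + ⌊θ - K * α⌋, ?_⟩
  have hcast : (((p.1 + K).toNat : ℕ) : ℝ) = p.1 + K := by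
    rw [← Int.cast_natCast, Int.toNat_of_nonneg (by omega)]
    push_cast; ring
  rw [Metric.mem_ball, Real.dist_eq, Int.fract, abs_sub_comm] at hball
  rw [hcast]
  convert hball using 2
  push_cast
  ring

end Irrational

open MeasureTheory in
theorem sum_sub_le_two_of_disjoint_mod_one {ι : Type*} (s : Finset ι) {u v : ι → ℝ}
    (huv : ∀ i ∈ s, u i ≤ v i ∧ v i ≤ u i + 1)
    (hdisj : ∀ i ∈ s, ∀ j ∈ s, i ≠ j → ∀ m : ℤ,
      Disjoint (Ioo (u i) (v i)) (Ioo (u j + m) (v j + m))) :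
    ∑ i ∈ s, (v i - u i) ≤ 2 := by
  set I : ι → Set ℝ := fun i => Ioo (u i - ⌊u i⌋) (v i - ⌊u i⌋)
  have hI : ∀ i ∈ s, I i ⊆ Ico 0 2 := fun i hi w hw => by
    have := Int.floor_le (u i)
    have := Int.lt_floor_add_one (u i)
    constructor <;> linarith [hw.1, hw.2, huv i hi]
  have hIdisj : (s : Set ι).PairwiseDisjoint I := by
    intro i hi j hj hij
    refine Set.disjoint_left.2 fun w hwi hwj => Set.disjoint_left.1
      (hdisj i hi j hj hij (⌊u i⌋ - ⌊u j⌋))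
      (show w + (⌊u i⌋ : ℝ) ∈ Ioo (u i) (v i) from ?_) ?_
    · constructor <;> linarith [hwi.1, hwi.2]
    · push_cast
      constructor <;> linarith [hwj.1, hwj.2]
  have hvol : ENNReal.ofReal (∑ i ∈ s, (v i - u i)) ≤ ENNReal.ofReal 2 := by
    rw [ENNReal.ofReal_sum_of_nonneg fun i hi => sub_nonneg.2 (huv i hi).1]
    calc ∑ i ∈ s, ENNReal.ofReal (v i - u i) = ∑ i ∈ s, volume (I i) := by
          refine Finset.sum_congr rfl fun i _ => ?_
          rw [Real.volume_Ioo]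
          congr 1
          ring
      _ = volume (⋃ i ∈ s, I i) :=
          (measure_biUnion_finset hIdisj fun _ _ => measurableSet_Ioo).symm
      _ ≤ volume (Ico (0 : ℝ) 2) := measure_mono (Set.iUnion₂_subset hI)
      _ = ENNReal.ofReal 2 := by rw [Real.volume_Ico, sub_zero]
  exact (ENNReal.ofReal_le_ofReal_iff zero_le_two).1 hvol

theorem card_filter_range_le_of_forall_window {P : ℕ → Prop} [DecidablePred P] {Q : ℕ}
    (hQ : 0 < Q) {C : ℝ}
    (hC : ∀ s : Finset ℕ, (∀ k ∈ s, ∀ l ∈ s, k < l + Q) → (∀ k ∈ s, P k) → (s.card : ℝ) ≤ C)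
    (n : ℕ) : (((Finset.range n).filter P).card : ℝ) ≤ (n / Q + 1) * C := by
  have hC0 : 0 ≤ C := by simpa using hC ∅ (by simp) (by simp)
  have hmaps : Set.MapsTo (· / Q) ((Finset.range n).filter P : Set ℕ) (Finset.range (n / Q + 1)) :=
    fun k hk => by
      simp only [Finset.coe_filter, Finset.mem_range, Set.mem_ofPred_eq, Finset.coe_range,
        Set.mem_Iio] at hk ⊢
      exact Nat.lt_succ_of_le (Nat.div_le_div_right hk.1.le)
  rw [Finset.card_eq_sum_card_fiberwise hmaps]
  push_cast
  calc ∑ q ∈ Finset.range (n / Q + 1), ((((Finset.range n).filter P).filter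
          (fun k => k / Q = q)).card : ℝ)
      ≤ ∑ _q ∈ Finset.range (n / Q + 1), C := by
        refine Finset.sum_le_sum fun q _ => hC _ (fun k hk l hl => ?_) fun k hk => ?_
        · simp only [Finset.mem_filter] at hk hl
          have := Nat.div_add_mod k Q
          have := Nat.div_add_mod l Q
          have := Nat.mod_lt k hQ
          have : Q * (k / Q) = Q * (l / Q) := by rw [hk.2, hl.2]
          omega
        · exact (Finset.mem_filter.1 (Finset.mem_filter.1 hk).1).2
    _ = ((n / Q : ℕ) + 1) * C := by simp
    _ ≤ (n / Q + 1) * C := by gcongr; exact Nat.cast_div_le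

theorem abs_sum_le_card_mul_add_card_filter_mul {ι : Type*} (s : Finset ι) (g : ι → ℝ)
    (P : ι → Prop) [DecidablePred P] {ε C : ℝ} (hε : 0 ≤ ε)
    (hgood : ∀ i ∈ s, ¬P i → |g i| ≤ ε) (hall : ∀ i ∈ s, |g i| ≤ C) :
    |∑ i ∈ s, g i| ≤ s.card * ε + (s.filter P).card * C := by
  have hsum : ∀ (t : Finset ι) (c : ℝ), (∀ i ∈ t, |g i| ≤ c) → |∑ i ∈ t, g i| ≤ t.card * c :=
    fun t c h => by
      simpa using (Finset.abs_sum_le_sum_abs g t).trans (Finset.sum_le_card_nsmul t _ c h)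
  have hnot : ((s.filter (¬P ·)).card : ℝ) ≤ s.card := by exact_mod_cast Finset.card_filter_le _ _
  rw [← Finset.sum_filter_add_sum_filter_not s P]
  calc |∑ i ∈ s.filter P, g i + ∑ i ∈ s.filter (¬P ·), g i|
      ≤ (s.filter P).card * C + (s.filter (¬P ·)).card * ε := by
        refine (abs_add_le _ _).trans
          (add_le_add (hsum _ _ fun i hi => ?_) (hsum _ _ fun i hi => ?_))
        · exact hall i (Finset.mem_filter.1 hi).1
        · exact hgood i (Finset.mem_filter.1 hi).1 (Finset.mem_filter.1 hi).2
    _ ≤ s.card * ε + (s.filter P).card * C := by nlinarith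

theorem abs_birkhoffSum_iterate_sub_le {X : Type*} (f : X → X) {φ : X → ℝ} {B : ℝ}
    (hB : ∀ x, |φ x| ≤ B) (p n : ℕ) (x : X) :
    |birkhoffSum f φ n (f^[p] x) - birkhoffSum f φ n x| ≤ 2 * p * B := by
  induction p with
  | zero => simp
  | succ p ih =>
    have hstep := birkhoffSum_apply_sub_birkhoffSum f φ n (f^[p] x)
    rw [← iterate_succ_apply' f p x] at hstep
    calc |birkhoffSum f φ n (f^[p + 1] x) - birkhoffSum f φ n x|
        ≤ |φ (f^[n] (f^[p] x)) - φ (f^[p] x)|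
          + |birkhoffSum f φ n (f^[p] x) - birkhoffSum f φ n x| := by
          rw [← hstep]; exact abs_sub_le _ _ _
      _ ≤ (B + B) + 2 * p * B := add_le_add ((abs_sub _ _).trans (add_le_add (hB _) (hB _))) ih
      _ = 2 * ↑(p + 1) * B := by push_cast; ring

namespace CircleDeg1Lift

variable (f H : CircleDeg1Lift) {α : ℝ}

theorem sub_lt_one_of_map_sub_lt_one {x y : ℝ} (h : H y - H x < 1) : y - x < 1 := by
  by_contra! hxy
  have := H.monotone (show x + 1 ≤ y by linarith)
  rw [H.map_add_one] at this
  linarith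

theorem iterate_add_int (n : ℕ) (x : ℝ) (m : ℤ) : f^[n] (x + m) = f^[n] x + m :=
  (f.commute_add_int m).iterate_left n x

theorem birkhoffSum_add_int {φ : ℝ → ℝ} (hφ : Periodic φ 1) (n : ℕ) (x : ℝ) (m : ℤ) :
    birkhoffSum f φ n (x + m) = birkhoffSum f φ n x := by
  refine Finset.sum_congr rfl fun k _ => ?_
  rw [iterate_add_int]
  simpa using hφ.int_mul m (f^[k] x)

variable {f H}

theorem map_iterate_of_map_eq_add (hH : ∀ x, H (f x) = H x + α) (k : ℕ) (x : ℝ) :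
    H (f^[k] x) = H x + k * α := by
  induction k with
  | zero => simp
  | succ k ih =>
    rw [iterate_succ_apply', hH, ih]
    push_cast
    ring

theorem disjoint_Ioo_iterate (hH : ∀ x, H (f x) = H x + α) {Q : ℕ} {d : ℝ}
    (hsep : ∀ j : ℕ, 0 < j → j < Q → ∀ m : ℤ, d ≤ |j * α - m|) {a b : ℝ} (hab : H b - H a < d)
    {k l : ℕ} (hkl : k ≠ l) (hk : k < l + Q) (hl : l < k + Q) (m : ℤ) :
    Disjoint (Ioo (f^[k] a) (f^[k] b)) (Ioo (f^[l] a + m) (f^[l] b + m)) := by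
  refine Set.disjoint_left.2 fun w hwk hwl => ?_
  have h1 := H.monotone hwk.1.le
  have h2 := H.monotone hwk.2.le
  have h3 := H.monotone hwl.1.le
  have h4 := H.monotone hwl.2.le
  simp only [map_add_int, map_iterate_of_map_eq_add hH] at h1 h2 h3 h4
  -- `H w` lies in both `H`-images, which are `d`-short: so `(l - k) α` is `d`-close to an integer
  rcases lt_or_gt_of_ne hkl with h | h
  · refine (hsep (l - k) (by omega) (by omega) (-m)).not_gt ?_
    rw [Nat.cast_sub h.le, abs_lt]
    push_cast
    constructor <;> linarith
  · refine (hsep (k - l) (by omega) (by omega) m).not_gt ?_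
    rw [Nat.cast_sub h.le, abs_lt]
    constructor <;> linarith

theorem card_le_of_le_iterate_sub (hH : ∀ x, H (f x) = H x + α) {Q : ℕ} {d : ℝ}
    (hsep : ∀ j : ℕ, 0 < j → j < Q → ∀ m : ℤ, d ≤ |j * α - m|) (hd1 : d ≤ 1) {a b : ℝ}
    (hle : a ≤ b) (hab : H b - H a < d) {η : ℝ} (hη : 0 < η) (s : Finset ℕ)
    (hs : ∀ k ∈ s, ∀ l ∈ s, k < l + Q) (hlong : ∀ k ∈ s, η ≤ f^[k] b - f^[k] a) :
    (s.card : ℝ) ≤ 2 / η := by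
  have hlen : ∑ k ∈ s, (f^[k] b - f^[k] a) ≤ 2 := by
    refine sum_sub_le_two_of_disjoint_mod_one s (fun k _ => ⟨f.monotone.iterate k hle, ?_⟩)
      fun k hk l hl hkl => disjoint_Ioo_iterate hH hsep hab hkl (hs k hk l hl) (hs l hl k hk)
    have := H.sub_lt_one_of_map_sub_lt_one (x := f^[k] a) (y := f^[k] b)
      (by simp only [map_iterate_of_map_eq_add hH]; linarith)
    linarith
  rw [le_div_iff₀ hη]
  calc (s.card : ℝ) * η = ∑ _k ∈ s, η := by simp
    _ ≤ ∑ k ∈ s, (f^[k] b - f^[k] a) := Finset.sum_le_sum hlong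
    _ ≤ 2 := hlen

theorem abs_birkhoffSum_sub_le_of_abs_map_sub_lt (hH : ∀ x, H (f x) = H x + α) {Q : ℕ}
    (hQ : 0 < Q) {d : ℝ} (hsep : ∀ j : ℕ, 0 < j → j < Q → ∀ m : ℤ, d ≤ |j * α - m|)
    (hd1 : d ≤ 1) {φ : ℝ → ℝ} {B ε η : ℝ} (hB : ∀ x, |φ x| ≤ B) (hε : 0 ≤ ε) (hη : 0 < η)
    (hφ : ∀ u v, |u - v| < η → |φ u - φ v| ≤ ε) {a b : ℝ} (hab : |H a - H b| < d) (n : ℕ) :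
    |birkhoffSum f φ n a - birkhoffSum f φ n b| ≤ n * ε + (n / Q + 1) * (2 / η) * (2 * B) := by
  wlog hle : a ≤ b generalizing a b
  · rw [abs_sub_comm]
    exact this (by rwa [abs_sub_comm]) (le_of_not_ge hle)
  have hB0 : 0 ≤ B := (abs_nonneg _).trans (hB 0)
  set bad := (Finset.range n).filter fun k => η ≤ f^[k] b - f^[k] a
  have hbad : (bad.card : ℝ) ≤ (n / Q + 1) * (2 / η) :=
    card_filter_range_le_of_forall_window hQ (fun s hs hlong =>
      card_le_of_le_iterate_sub hH hsep hd1 hle (by linarith [(abs_lt.1 hab).1]) hη s hs hlong) n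
  rw [birkhoffSum, birkhoffSum, ← Finset.sum_sub_distrib]
  calc |∑ k ∈ Finset.range n, (φ (f^[k] a) - φ (f^[k] b))|
      ≤ (Finset.range n).card * ε + bad.card * (2 * B) := by
        refine abs_sum_le_card_mul_add_card_filter_mul _ _ _ hε (fun k _ hk => hφ _ _ ?_)
          fun k _ => (abs_sub _ _).trans (by linarith [hB (f^[k] a), hB (f^[k] b)])
        rw [abs_sub_comm, abs_of_nonneg (sub_nonneg.2 (f.monotone.iterate k hle))]
        exact lt_of_not_ge hk
    _ ≤ n * ε + (n / Q + 1) * (2 / η) * (2 * B) := by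
        rw [Finset.card_range]
        gcongr

variable (f H)

theorem exists_abs_birkhoffSum_sub_le (hH : ∀ x, H (f x) = H x + α) (hα : Irrational α)
    {φ : ℝ → ℝ} (hφ : Continuous φ) (hper : Periodic φ 1) {ε : ℝ} (hε : 0 < ε) :
    ∃ C : ℝ, ∀ (n : ℕ) (x y : ℝ),
      |birkhoffSum f φ n x - birkhoffSum f φ n y| ≤ n * ε + C := by
  obtain ⟨B, hB⟩ := isBounded_iff_forall_norm_le.1 (hper.isBounded_of_continuous one_ne_zero hφ)
  replace hB : ∀ x, |φ x| ≤ B := fun x => hB _ (Set.mem_range_self x)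
  have hB0 : 0 ≤ B := (abs_nonneg _).trans (hB 0)
  obtain ⟨η, hη, hφη⟩ :=
    Metric.uniformContinuous_iff.1 (hper.uniformContinuous_of_continuous hφ) (ε / 2) (by positivity)
  set K := 2 / η * (2 * B)
  -- the windows have length `Q ≥ 2K/ε`, so that the long arcs cost at most `n ε / 2 + K`
  set Q := ⌈2 * K / ε⌉₊ + 1
  have hKQ : K / Q ≤ ε / 2 := by
    have hQ : 2 * K / ε < Q := (Nat.le_ceil _).trans_lt (by exact_mod_cast Nat.lt_succ_self _)
    rw [div_lt_iff₀ hε] at hQ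
    rw [div_le_iff₀ (by positivity)]
    linarith
  obtain ⟨d, hd0, hd1, hsep⟩ := hα.exists_pos_le_abs_nat_mul_sub_int Q
  obtain ⟨J, hJ⟩ := hα.exists_nat_mul_add_int_near hd0
  refine ⟨2 * J * B + K, fun n x y => ?_⟩
  obtain ⟨p, hpJ, m, hpm⟩ := hJ (H y - H x)
  have hclose : |H (f^[p] x + m) - H y| < d := by
    rw [map_add_int, map_iterate_of_map_eq_add hH]
    convert hpm using 2
    ring
  have hfar := abs_birkhoffSum_sub_le_of_abs_map_sub_lt hH (by positivity) hsep hd1 hB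
    (by positivity) hη (fun u v huv => (hφη huv).le) hclose n
  rw [birkhoffSum_add_int f hper] at hfar
  have hshift := abs_birkhoffSum_iterate_sub_le f hB p n x
  have hp : (p : ℝ) ≤ J := by exact_mod_cast hpJ
  have hwindows : (n / Q + 1) * (2 / η) * (2 * B) ≤ n * (ε / 2) + K := by
    calc (n / Q + 1) * (2 / η) * (2 * B) = n * (K / Q) + K := by ring
      _ ≤ n * (ε / 2) + K := by gcongr
  rw [abs_sub_comm] at hshift
  calc |birkhoffSum f φ n x - birkhoffSum f φ n y|
      ≤ |birkhoffSum f φ n x - birkhoffSum f φ n (f^[p] x)|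
        + |birkhoffSum f φ n (f^[p] x) - birkhoffSum f φ n y| := abs_sub_le _ _ _
    _ ≤ n * ε + (2 * J * B + K) := by
        nlinarith [mul_le_mul_of_nonneg_right hp hB0]

theorem eventually_abs_birkhoffSum_sub_le (hH : ∀ x, H (f x) = H x + α) (hα : Irrational α)
    {φ : ℝ → ℝ} (hφ : Continuous φ) (hper : Periodic φ 1) {ε : ℝ} (hε : 0 < ε) :
    ∀ᶠ n : ℕ in atTop, ∀ x y : ℝ, |birkhoffSum f φ n x - birkhoffSum f φ n y| ≤ n * ε := by
  obtain ⟨C, hC⟩ := exists_abs_birkhoffSum_sub_le f H hH hα hφ hper (half_pos hε)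
  refine eventually_atTop.2 ⟨⌈2 * C / ε⌉₊, fun n hn x y => (hC n x y).trans ?_⟩
  have : 2 * C / ε ≤ n := (Nat.le_ceil _).trans (by exact_mod_cast hn)
  rw [div_le_iff₀ hε] at this
  linarith

end CircleDeg1Lift

section Derivatives

variable {F : ℝ → ℝ}

theorem hasDerivAt_iterate_prod (hF : Differentiable ℝ F) (n : ℕ) (x : ℝ) :
    HasDerivAt F^[n] (∏ k ∈ Finset.range n, deriv F (F^[k] x)) x := by
  induction n with
  | zero => simpa using hasDerivAt_id x
  | succ n ih =>
    rw [iterate_succ', Finset.prod_range_succ, mul_comm]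
    exact (hF (F^[n] x)).hasDerivAt.comp x ih

theorem deriv_iterate_pos (hF : Differentiable ℝ F) (hpos : ∀ x, 0 < deriv F x) (n : ℕ)
    (x : ℝ) : 0 < deriv F^[n] x := by
  rw [(hasDerivAt_iterate_prod hF n x).deriv]
  exact Finset.prod_pos fun k _ => hpos _

theorem log_deriv_iterate_eq_birkhoffSum (hF : Differentiable ℝ F) (hpos : ∀ x, 0 < deriv F x)
    (n : ℕ) (x : ℝ) :
    Real.log (deriv F^[n] x) = birkhoffSum F (fun y => Real.log (deriv F y)) n x := by
  rw [(hasDerivAt_iterate_prod hF n x).deriv, Real.log_prod fun k _ => (hpos _).ne']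
  rfl

theorem periodic_deriv_of_map_add_one (hP : ∀ x, F (x + 1) = F x + 1) : Periodic (deriv F) 1 :=
  fun x => by
    rw [← deriv_comp_add_const, show (fun y => F (y + 1)) = fun y => F y + 1 from funext hP,
      deriv_add_const]

theorem exists_deriv_iterate_eq_one (hF : Differentiable ℝ F) (hP : ∀ x, F (x + 1) = F x + 1)
    (n : ℕ) : ∃ z, deriv F^[n] z = 1 := by
  have hFn : Differentiable ℝ F^[n] := fun x => (hasDerivAt_iterate_prod hF n x).differentiableAt
  obtain ⟨z, -, hz⟩ := exists_deriv_eq_slope F^[n] zero_lt_one hFn.continuous.continuousOn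
    hFn.differentiableOn
  refine ⟨z, ?_⟩
  rw [hz, show (1 : ℝ) = 0 + 1 by norm_num, (Commute.iterate_left hP n) 0]
  norm_num

end Derivatives

namespace CircleDiffeo

variable (f : CircleDiffeo) {α : ℝ}

theorem strictMono : StrictMono f.toFun := strictMono_of_deriv_pos f.deriv_pos

def toCircleDeg1Lift : CircleDeg1Lift :=
  ⟨⟨f.toFun, f.strictMono.monotone⟩, f.commute_translation⟩

@[simp]
theorem coe_toCircleDeg1Lift : ⇑f.toCircleDeg1Lift = f.toFun := rfl

theorem translationNumber_eq (hf : hasRotationNumber f α) :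
    f.toCircleDeg1Lift.translationNumber = α :=
  tendsto_nhds_unique (by simpa [CircleDeg1Lift.coe_pow] using
    f.toCircleDeg1Lift.tendsto_translation_number₀) hf

theorem exists_map_eq_add (hf : hasRotationNumber f α) :
    ∃ H : CircleDeg1Lift, ∀ x, H (f.toFun x) = H x + α := by
  have hbij : Bijective f.toCircleDeg1Lift := ⟨f.strictMono.injective,
    (CircleDeg1Lift.continuous_iff_surjective _).1 f.contDiff.continuous⟩
  obtain ⟨H, hH⟩ := CircleDeg1Lift.semiconj_of_isUnit_of_translationNumber_eq
    (CircleDeg1Lift.isUnit_iff_bijective.2 hbij)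
    (CircleDeg1Lift.translate (Multiplicative.ofAdd α)).isUnit
    (by rw [f.translationNumber_eq hf, CircleDeg1Lift.translationNumber_translate])
  exact ⟨H, fun x => (hH x).trans (add_comm _ _)⟩

end CircleDiffeo

/-- **Lemma.** Let `f` be a `C¹`-diffeomorphism of `S¹` with irrational rotation number.
For any `λ > 1` there is `n_λ > 0` such that `λ⁻ⁿ ≤ (fⁿ)'(x) ≤ λⁿ` for every `n > n_λ`
and every `x ∈ S¹`. -/
theorem subexponential_derivatives (α : ℝ) (hα : Irrational α)
    (f : CircleDiffeo) (hf : hasRotationNumber f α) (lam : ℝ) (hlam : 1 < lam) :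
    ∃ nlam : ℕ, 0 < nlam ∧ ∀ n : ℕ, nlam < n → ∀ x : ℝ,
      (lam ^ n)⁻¹ ≤ deriv (f.toFun^[n]) x ∧ deriv (f.toFun^[n]) x ≤ lam ^ n := by
  obtain ⟨H, hH⟩ := f.exists_map_eq_add hf
  have hF : Differentiable ℝ f.toFun := f.contDiff.differentiable one_ne_zero
  have hφ : Continuous fun y => Real.log (deriv f.toFun y) :=
    (f.contDiff.continuous_deriv le_rfl).log fun x => (f.deriv_pos x).ne'
  obtain ⟨N, hN⟩ := eventually_atTop.1 <| f.toCircleDeg1Lift.eventually_abs_birkhoffSum_sub_le H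
    hH hα hφ ((periodic_deriv_of_map_add_one f.commute_translation).comp Real.log)
    (Real.log_pos hlam)
  refine ⟨N + 1, N.succ_pos, fun n hn x => ?_⟩
  obtain ⟨z, hz⟩ := exists_deriv_iterate_eq_one hF f.commute_translation n
  refine inv_le_and_le_of_abs_log_le (deriv_iterate_pos hF f.deriv_pos n x) (by positivity) ?_
  have hz0 : birkhoffSum f.toFun (fun y => Real.log (deriv f.toFun y)) n z = 0 := by
    rw [← log_deriv_iterate_eq_birkhoffSum hF f.deriv_pos, hz, Real.log_one]
  rw [Real.log_pow, log_deriv_iterate_eq_birkhoffSum hF f.deriv_pos,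
    ← sub_zero (birkhoffSum _ _ _ _), ← hz0]
  exact hN n (by omega) x z
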